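/- Triviality of the graded commutant of the fermion operators: if A ∈ M satisfies a_k A = (G A G) a_k and a_kᴴ A = (G A G) a_kᴴ for every site k ∈ Fin n (i.e. the graded commutators of A with every a_k and a_kᴴ vanish), then A is a scalar multiple of the identity matrix. -/

import Mathlib

open Matrix

noncomputable section JW

/-- The operator algebra of `n` fermionic sites: `2^n × 2^n` complex matrices, with the
index set realized as `Fin n → Fin 2` (the tensor-product basis). -/
abbrev FermionAlg (n : ℕ) := Matrix (Fin n → Fin 2) (Fin n → Fin 2) ℂ

/-- Jordan–Wigner annihilation operator at site `k`:
`a_k = σ₃^{⊗ k} ⊗ σ⁻ ⊗ 1₂^{⊗ (n−k−1)}`, with `σ⁻ = [[0,0],[1,0]]` and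
`σ₃ = [[1,0],[0,−1]]`, written entrywise in the tensor-product basis
(the entry of a tensor product at `(v, w)` is the product of the entries of the factors). -/
def jwA (n : ℕ) (k : Fin n) : FermionAlg n :=
  Matrix.of fun v w => ∏ j : Fin n,
    if j < k then (if v j = w j then (-1 : ℂ) ^ (v j : ℕ) else 0)
    else if j = k then (if v j = 1 ∧ w j = 0 then 1 else 0)
    else (if v j = w j then 1 else 0)

/-- The number operator `n_k = a_kᴴ a_k`. -/
def numOp (n : ℕ) (k : Fin n) : FermionAlg n := (jwA n k)ᴴ * jwA n k

/-- The grading unitary `G = ∏_k (1 − 2 n_k)`. -/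
def grading (n : ℕ) : FermionAlg n :=
  (List.ofFn fun k : Fin n => (1 - 2 • numOp n k)).prod

/-- The free energy `F = Σ_k (ε_k − μ) n_k`. -/
def freeEnergy (n : ℕ) (ε : Fin n → ℝ) (μ : ℝ) : FermionAlg n :=
  ∑ k, ((ε k - μ : ℝ) : ℂ) • numOp n k

/-- The Gibbs state `ρ(A) = Tr(exp(−βF)·A)/Tr(exp(−βF))`. -/
def gibbs (n : ℕ) (ε : Fin n → ℝ) (μ β : ℝ) (A : FermionAlg n) : ℂ :=
  ((NormedSpace.exp ((-(β : ℂ)) • freeEnergy n ε μ)) * A).trace /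
    (NormedSpace.exp ((-(β : ℂ)) • freeEnergy n ε μ)).trace

end JW

/-!
In the tensor-product basis the only nonzero entries of `a_k` are `a_k v v' = ±1` for `v k = 1`,
where `v'` is `v` with site `k` reset to `0`; and `G` is diagonal with entries `±1`. Reading off
single entries of `a_k A = (G A G) a_k` and `a_kᴴ A = (G A G) a_kᴴ` gives `A v w = 0` whenever
`v k ≠ w k`, and `A v' v' = A v v`. So `A` is diagonal, and resetting the sites one at a time
carries every diagonal entry to `A 0 0`.
-/

open Function Finset

theorem apply_eq_apply_const_of_apply_update {ι β γ : Type*} [DecidableEq ι] [Fintype ι]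
    (f : (ι → β) → γ) (b : β) (hf : ∀ v i, f (update v i b) = f v) (v : ι → β) :
    f v = f fun _ => b := by
  have key : ∀ s : Finset ι, f (s.piecewise (fun _ => b) v) = f v := by
    intro s
    induction s using Finset.induction_on with
    | empty => rw [piecewise_empty]
    | insert i s _ ih => rw [piecewise_insert, hf, ih]
  rw [← key univ, piecewise_univ]

section JordanWigner

variable {n : ℕ}

def jwSign (k : Fin n) (v : Fin n → Fin 2) : ℂ :=
  ∏ j, if j < k then (-1) ^ (v j : ℕ) else 1

theorem jwSign_ne_zero (k : Fin n) (v : Fin n → Fin 2) : jwSign k v ≠ 0 :=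
  prod_ne_zero_iff.2 fun j _ => by split_ifs <;> simp

theorem conj_jwSign_mul_self (k : Fin n) (v : Fin n → Fin 2) :
    starRingEnd ℂ (jwSign k v) * jwSign k v = 1 := by
  rw [jwSign, map_prod, ← prod_mul_distrib]
  refine prod_eq_one fun j _ => ?_
  split_ifs <;> simp [← mul_pow]

theorem jwA_apply (k : Fin n) (v w : Fin n → Fin 2) :
    jwA n k v w = if v k = 1 ∧ w = update v k 0 then jwSign k v else 0 := by
  have hfactor : ∀ j, (if j < k then (if v j = w j then (-1 : ℂ) ^ (v j : ℕ) else 0)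
      else if j = k then (if v j = 1 ∧ w j = 0 then 1 else 0)
      else (if v j = w j then 1 else 0)) =
      (if j < k then (-1) ^ (v j : ℕ) else 1) *
        if (if j = k then v j = 1 ∧ w j = 0 else v j = w j) then 1 else 0 := by
    intro j
    by_cases hjk : j = k
    · subst hjk; simp
    · split_ifs <;> simp_all
  have hsupp : (∀ j, if j = k then v j = 1 ∧ w j = 0 else v j = w j) ↔
      v k = 1 ∧ w = update v k 0 := by
    rw [eq_update_iff]
    constructor
    · intro h
      have hk : v k = 1 ∧ w k = 0 := by simpa using h k
      exact ⟨hk.1, hk.2, fun j hj => by simpa [hj, eq_comm] using h j⟩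
    · rintro ⟨hv, hw, h⟩ j
      split_ifs with hj
      · exact hj ▸ ⟨hv, hw⟩
      · exact (h j hj).symm
  rw [jwA, of_apply, Fintype.prod_congr _ _ hfactor, prod_mul_distrib, Fintype.prod_boole]
  simp only [hsupp, mul_ite, mul_one, mul_zero, jwSign]

theorem jwA_apply' (k : Fin n) (v w : Fin n → Fin 2) :
    jwA n k v w = if w k = 0 ∧ v = update w k 1 then jwSign k v else 0 := by
  have hsupp : (v k = 1 ∧ w = update v k 0) ↔ (w k = 0 ∧ v = update w k 1) := by
    simp only [eq_update_iff]
    grind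
  simp only [jwA_apply, hsupp]

variable {m : Type*}

theorem jwA_mul_apply (k : Fin n) (B : Matrix (Fin n → Fin 2) m ℂ) (v : Fin n → Fin 2) (x : m) :
    (jwA n k * B) v x = if v k = 1 then jwSign k v * B (update v k 0) x else 0 := by
  simp [mul_apply, jwA_apply, ite_and]

theorem mul_jwA_apply (k : Fin n) (B : Matrix m (Fin n → Fin 2) ℂ) (x : m) (w : Fin n → Fin 2) :
    (B * jwA n k) x w = if w k = 0 then B x (update w k 1) * jwSign k (update w k 1) else 0 := by
  simp [mul_apply, jwA_apply', ite_and]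

theorem conjTranspose_jwA_mul_apply (k : Fin n) (B : Matrix (Fin n → Fin 2) m ℂ)
    (v : Fin n → Fin 2) (x : m) :
    ((jwA n k)ᴴ * B) v x =
      if v k = 0 then star (jwSign k (update v k 1)) * B (update v k 1) x else 0 := by
  split_ifs with hv <;> simp [mul_apply, jwA_apply', hv, apply_ite (starRingEnd ℂ)]

theorem mul_conjTranspose_jwA_apply (k : Fin n) (B : Matrix m (Fin n → Fin 2) ℂ) (x : m)
    (w : Fin n → Fin 2) :
    (B * (jwA n k)ᴴ) x w = if w k = 1 then B x (update w k 0) * star (jwSign k w) else 0 := by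
  split_ifs with hw <;> simp [mul_apply, jwA_apply, hw, apply_ite (starRingEnd ℂ)]

theorem numOp_eq_diagonal (k : Fin n) :
    numOp n k = diagonal fun v => if v k = 0 then 1 else 0 := by
  ext v w
  by_cases hv : v k = 0
  · have hupdate : update v k 0 = v := update_eq_self_iff.2 hv.symm
    simp [numOp, conjTranspose_jwA_mul_apply, jwA_apply, diagonal_apply, hv, update_idem,
      hupdate, conj_jwSign_mul_self, eq_comm]
  · simp [numOp, conjTranspose_jwA_mul_apply, diagonal_apply, hv]

theorem grading_eq_diagonal :
    grading n = diagonal fun v => ∏ k, if v k = 0 then -1 else 1 := by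
  have hfactor : ∀ k, 1 - 2 • numOp n k =
      diagonalRingHom (Fin n → Fin 2) ℂ fun v => if v k = 0 then -1 else 1 := by
    intro k
    ext v w
    by_cases hvw : v = w
    · subst hvw
      by_cases hv : v k = 0 <;> simp [numOp_eq_diagonal, two_smul, hv]
    · simp [numOp_eq_diagonal, two_smul, hvw]
  have hlist : (List.ofFn fun k => 1 - 2 • numOp n k) =
      (List.ofFn fun k v => if v k = 0 then -1 else 1).map (diagonalRingHom _ ℂ) := by
    rw [List.map_ofFn]
    exact congrArg List.ofFn (funext hfactor)
  rw [grading, hlist, ← map_list_prod, List.prod_ofFn]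
  ext v w
  simp [diagonal_apply, Finset.prod_apply]

theorem grading_mul_mul_grading_apply_self (B : FermionAlg n) (v : Fin n → Fin 2) :
    (grading n * B * grading n) v v = B v v := by
  rw [grading_eq_diagonal, mul_diagonal, diagonal_mul, mul_right_comm, ← prod_mul_distrib,
    prod_eq_one fun k _ => by split_ifs <;> norm_num, one_mul]

variable {A : FermionAlg n} {k : Fin n} {v w : Fin n → Fin 2}

theorem apply_eq_zero_of_jwA_mul_eq (hk : jwA n k * A = (grading n * A * grading n) * jwA n k)
    (hv : v k = 0) (hw : w k = 1) : A v w = 0 := by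
  have hfix : update v k 0 = v := update_eq_self_iff.2 hv.symm
  have h := congrFun (congrFun hk (update v k 1)) w
  rw [jwA_mul_apply, mul_jwA_apply, if_pos (update_self k 1 v), if_neg (by simp [hw]),
    update_idem, hfix] at h
  exact (mul_eq_zero.1 h).resolve_left (jwSign_ne_zero _ _)

theorem apply_eq_zero_of_conjTranspose_jwA_mul_eq
    (hk : (jwA n k)ᴴ * A = (grading n * A * grading n) * (jwA n k)ᴴ)
    (hv : v k = 1) (hw : w k = 0) : A v w = 0 := by
  have hfix : update v k 1 = v := update_eq_self_iff.2 hv.symm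
  have h := congrFun (congrFun hk (update v k 0)) w
  rw [conjTranspose_jwA_mul_apply, mul_conjTranspose_jwA_apply, if_pos (update_self k 0 v),
    if_neg (by simp [hw]), update_idem, hfix] at h
  exact (mul_eq_zero.1 h).resolve_left (star_ne_zero.2 (jwSign_ne_zero _ _))

theorem apply_update_zero_self_of_jwA_mul_eq
    (hk : jwA n k * A = (grading n * A * grading n) * jwA n k) (v : Fin n → Fin 2) :
    A (update v k 0) (update v k 0) = A v v := by
  by_cases hv : v k = 0
  · rw [update_eq_self_iff.2 hv.symm]
  have hv1 : v k = 1 := by omega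
  have hfix : update v k 1 = v := update_eq_self_iff.2 hv1.symm
  have h := congrFun (congrFun hk v) (update v k 0)
  rw [jwA_mul_apply, mul_jwA_apply, if_pos hv1, if_pos (update_self k 0 v), update_idem,
    hfix, grading_mul_mul_grading_apply_self, mul_comm] at h
  exact mul_right_cancel₀ (jwSign_ne_zero k v) h

end JordanWigner

theorem graded_commutant_trivial_general
    (n : ℕ) (A : FermionAlg n)
    (ha : ∀ k : Fin n, jwA n k * A = (grading n * A * grading n) * jwA n k)
    (hadag : ∀ k : Fin n, (jwA n k)ᴴ * A = (grading n * A * grading n) * (jwA n k)ᴴ) :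
    ∃ c : ℂ, A = c • (1 : FermionAlg n) := by
  refine ⟨A 0 0, ?_⟩
  ext v w
  rcases eq_or_ne v w with rfl | hvw
  · rw [Matrix.smul_apply, one_apply_eq, smul_eq_mul, mul_one]
    exact apply_eq_apply_const_of_apply_update (fun v => A v v) 0
      (fun v k => apply_update_zero_self_of_jwA_mul_eq (ha k) v) v
  · rw [Matrix.smul_apply, one_apply_ne hvw, smul_zero]
    obtain ⟨k, hk⟩ := Function.ne_iff.1 hvw
    rcases (by omega : v k = 0 ∧ w k = 1 ∨ v k = 1 ∧ w k = 0) with ⟨hv, hw⟩ | ⟨hv, hw⟩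
    · exact apply_eq_zero_of_jwA_mul_eq (ha k) hv hw
    · exact apply_eq_zero_of_conjTranspose_jwA_mul_eq (hadag k) hv hw

/-- **triviality of the graded commutant.** If `A ∈ M` satisfies
`a_k A = (G A G) a_k` and `a_kᴴ A = (G A G) a_kᴴ` for every site `k` (i.e. the graded
commutators of `A` with all `a_k`, `a_kᴴ` vanish), then `A` is a scalar multiple of the
identity matrix. -/
theorem graded_commutant_trivial
    (n : ℕ) (hn : 1 ≤ n) (A : FermionAlg n)
    (ha : ∀ k : Fin n, jwA n k * A = (grading n * A * grading n) * jwA n k)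
    (hadag : ∀ k : Fin n, (jwA n k)ᴴ * A = (grading n * A * grading n) * (jwA n k)ᴴ) :
    ∃ c : ℂ, A = c • (1 : FermionAlg n) :=
  graded_commutant_trivial_general n A ha hadag
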